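/- Let X be a discrete real random variable (d = 1, distribution P_X purely atomic with countable support 𝒳) such that E[X] = 0 and inf_{x∈𝒳} |x| > 0. Then for every integer M ≥ 2, the high-noise Ziv–Zakai functional is strictly below the variance: V̄(P_X, M) < Var(X). -/

import Mathlib

open MeasureTheory ProbabilityTheory ENNReal

noncomputable section

variable {d : ℕ} {𝒴 : Type*} [MeasurableSpace 𝒴]

/-- Law of `X - u` when `X ∼ P`, scalar case. -/
def shiftLaw1 (P : Measure ℝ) (u : ℝ) : Measure ℝ :=
  P.map (· - u)

/-- The mixture measure `μ_U = ∑_k P_{X-u_k}`, scalar case. -/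
def mixMeasure1 (P : Measure ℝ) {M : ℕ} (U : Fin M → ℝ) : Measure ℝ :=
  ∑ k : Fin M, shiftLaw1 P (U k)

/-- `H(P_X,t,M)` in the scalar case, where the constraint forces `u_k = kt`:
`∫ max_j (dP_{X−jt}/dμ_U) dμ_U`. -/
def Hfun1 (P : Measure ℝ) (M : ℕ) (t : ℝ) : ℝ≥0∞ :=
  ∫⁻ x, (⨆ j : Fin M,
      (shiftLaw1 P ((j : ℝ) * t)).rnDeriv (mixMeasure1 P fun k : Fin M => (k : ℝ) * t) x)
    ∂(mixMeasure1 P fun k : Fin M => (k : ℝ) * t)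

/-- High-noise Ziv–Zakai functional with valley-filling, scalar case. -/
def Vbar1 (P : Measure ℝ) (M : ℕ) : ℝ≥0∞ :=
  ∫⁻ t in Set.Ioi (0 : ℝ),
    ENNReal.ofReal (t / 2) *
      ⨆ (u : ℝ) (_ : t ≤ u), ((M : ℝ≥0∞) - Hfun1 P M u) / ((M : ℝ≥0∞) - 1)

/-!
`H(u)` is `M` times the best success probability of an `M`-ary test between the shifted laws
`X - j u`, so every decision rule bounds it from below. Testing `X` against `X - u` on the
progression `a + ℕ u` through an atom `a` gives `H(u) ≥ 1 + P{a}`; the nearest-grid-point decoder,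
which can only err when `|X| ≥ u / 2`, gives `M - H(u) ≤ (M - 1) P(|X| ≥ u / 2)`. Hence the
valley-filled integrand is at most `(t / 2) min (1 - P{a} / (M - 1)) P(|X| ≥ t / 2)`, whereas the
layer-cake formula gives `Var X = ∫ (t / 2) P(|X| ≥ t / 2) dt`. As `|X| ≥ c` almost surely, the
tail probability is `1` for `t ≤ 2 c`, so the integrands differ by `(t / 2) P{a} / (M - 1) > 0`
there, and finiteness of `Var X` makes the inequality strict.
-/

open Set Function

section HypothesisTests

variable {α ι : Type*} [MeasurableSpace α] {μ : Measure α} {ν : ι → Measure α}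
  [∀ i, (ν i).HaveLebesgueDecomposition μ]

lemma sum_measure_le_lintegral_iSup_rnDeriv [Fintype ι] (hν : ∀ i, ν i ≪ μ) {A : ι → Set α}
    (hA : ∀ i, MeasurableSet (A i)) (hdisj : Pairwise (Disjoint on A)) :
    ∑ i, ν i (A i) ≤ ∫⁻ x, ⨆ i, (ν i).rnDeriv μ x ∂μ :=
  calc ∑ i, ν i (A i) = ∑ i, ∫⁻ x in A i, (ν i).rnDeriv μ x ∂μ := by
        simp_rw [Measure.setLIntegral_rnDeriv' (hν _) (hA _)]
    _ ≤ ∑ i, ∫⁻ x in A i, ⨆ k, (ν k).rnDeriv μ x ∂μ := by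
        gcongr with i x
        exact le_iSup (fun k => (ν k).rnDeriv μ x) i
    _ = ∫⁻ x in ⋃ i, A i, ⨆ k, (ν k).rnDeriv μ x ∂μ := by
        rw [lintegral_iUnion hA hdisj, tsum_fintype]
    _ ≤ ∫⁻ x, ⨆ k, (ν k).rnDeriv μ x ∂μ := setLIntegral_le_lintegral _ _

lemma measure_add_measure_compl_le_lintegral_iSup_rnDeriv (hν : ∀ i, ν i ≪ μ) (i j : ι)
    {A : Set α} (hA : MeasurableSet A) :
    ν i A + ν j Aᶜ ≤ ∫⁻ x, ⨆ k, (ν k).rnDeriv μ x ∂μ :=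
  calc ν i A + ν j Aᶜ
      = ∫⁻ x in A, (ν i).rnDeriv μ x ∂μ + ∫⁻ x in Aᶜ, (ν j).rnDeriv μ x ∂μ := by
        rw [Measure.setLIntegral_rnDeriv' (hν i) hA, Measure.setLIntegral_rnDeriv' (hν j) hA.compl]
    _ ≤ ∫⁻ x in A, ⨆ k, (ν k).rnDeriv μ x ∂μ + ∫⁻ x in Aᶜ, ⨆ k, (ν k).rnDeriv μ x ∂μ := by
        gcongr with x x
        · exact le_iSup (fun k => (ν k).rnDeriv μ x) i
        · exact le_iSup (fun k => (ν k).rnDeriv μ x) j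
    _ = ∫⁻ x, ⨆ k, (ν k).rnDeriv μ x ∂μ := lintegral_add_compl _ hA

end HypothesisTests

lemma sum_measure_le_card_sub_one_mul {α ι : Type*} [MeasurableSpace α] [Fintype ι]
    (μ : Measure α) [IsFiniteMeasure μ] {B : ι → Set α} (hB : ∀ i, MeasurableSet (B i))
    {S : Set α} (hBS : ∀ i, B i ⊆ S) (hmiss : ∀ x ∈ S, ∃ i, x ∉ B i) :
    ∑ i, μ (B i) ≤ (Fintype.card ι - 1) * μ S := by
  have hcover : μ S ≤ ∑ i, μ (S \ B i) := by
    refine (measure_mono fun x hx => ?_).trans (measure_iUnion_fintype_le μ _)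
    obtain ⟨i, hi⟩ := hmiss x hx
    exact mem_iUnion.2 ⟨i, hx, hi⟩
  have hsplit : ∑ i, μ (B i) + ∑ i, μ (S \ B i) = Fintype.card ι * μ S := by
    rw [← Finset.sum_add_distrib, ← Finset.card_univ, ← nsmul_eq_mul, ← Finset.sum_const]
    refine Finset.sum_congr rfl fun i _ => ?_
    simpa only [inter_eq_right.2 (hBS i)] using measure_inter_add_sdiff (μ := μ) S (hB i)
  rw [ENNReal.sub_mul fun _ _ => measure_ne_top μ S, one_mul]
  refine ENNReal.le_sub_of_add_le_right (measure_ne_top μ S) ?_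
  calc ∑ i, μ (B i) + μ S ≤ ∑ i, μ (B i) + ∑ i, μ (S \ B i) := by gcongr
    _ = Fintype.card ι * μ S := hsplit

section ShiftFamily

variable (P : Measure ℝ)

instance isProbabilityMeasure_shiftLaw1 [IsProbabilityMeasure P] (u : ℝ) :
    IsProbabilityMeasure (shiftLaw1 P u) :=
  Measure.isProbabilityMeasure_map (measurable_sub_const u).aemeasurable

instance isFiniteMeasure_mixMeasure1 [IsFiniteMeasure P] {M : ℕ} (U : Fin M → ℝ) :
    IsFiniteMeasure (mixMeasure1 P U) := by
  unfold mixMeasure1 shiftLaw1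
  infer_instance

lemma shiftLaw1_absolutelyContinuous_mixMeasure1 {M : ℕ} (U : Fin M → ℝ) (j : Fin M) :
    shiftLaw1 P (U j) ≪ mixMeasure1 P U :=
  Measure.absolutelyContinuous_of_le <|
    Finset.single_le_sum (f := fun k => shiftLaw1 P (U k)) (fun _ _ => Measure.zero_le _)
      (Finset.mem_univ j)

lemma shiftLaw1_apply (u : ℝ) {s : Set ℝ} (hs : MeasurableSet s) :
    shiftLaw1 P u s = P ((· - u) ⁻¹' s) :=
  Measure.map_apply (measurable_sub_const u) hs

variable [IsProbabilityMeasure P]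

lemma one_add_measure_singleton_le_Hfun1 {M : ℕ} (hM : 2 ≤ M) {u : ℝ} (hu : 0 < u) (a : ℝ) :
    1 + P {a} ≤ Hfun1 P M u := by
  -- On the progression `F = a + ℕ u`, the law of `X` outweighs that of `X - u` by exactly `P {a}`.
  set F := range fun k : ℕ => a + k * u
  have hF : MeasurableSet F := (countable_range _).measurableSet
  have hFsucc : F = insert a ((· - u) ⁻¹' F) := by
    ext x
    simp only [F, mem_insert_iff, mem_preimage, mem_range]
    constructor
    · rintro ⟨_ | k, rfl⟩
      · simp
      · exact Or.inr ⟨k, by push_cast; ring⟩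
    · rintro (rfl | ⟨k, hk⟩)
      · exact ⟨0, by simp⟩
      · exact ⟨k + 1, by push_cast; linarith⟩
  have ha : a ∉ (· - u) ⁻¹' F := by
    rintro ⟨k, hk⟩
    nlinarith [show (0 : ℝ) ≤ k by positivity]
  have hPF : P F = P {a} + P ((· - u) ⁻¹' F) := by
    conv_lhs => rw [hFsucc, insert_eq]
    exact measure_union (disjoint_singleton_left.2 ha) (hF.preimage (measurable_sub_const u))
  have h0 : shiftLaw1 P (((⟨0, by omega⟩ : Fin M) : ℝ) * u) F = P F := by
    simp [shiftLaw1_apply P _ hF]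
  have h1 : shiftLaw1 P (((⟨1, by omega⟩ : Fin M) : ℝ) * u) Fᶜ = 1 - P ((· - u) ⁻¹' F) := by
    simp [prob_compl_eq_one_sub hF, shiftLaw1_apply P _ hF]
  calc 1 + P {a} = P F + (1 - P ((· - u) ⁻¹' F)) := by
        rw [hPF, add_assoc, add_tsub_cancel_of_le prob_le_one, add_comm]
    _ ≤ Hfun1 P M u := by
        rw [← h0, ← h1]
        exact measure_add_measure_compl_le_lintegral_iSup_rnDeriv
          (shiftLaw1_absolutelyContinuous_mixMeasure1 P fun k : Fin M => (k : ℝ) * u) _ _ hF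

end ShiftFamily

section NearestGridIndex

/-- Decoder for the hypotheses `y = x - j u`, `j < M`: the index `k < M` nearest to `-y / u`. -/
def nearestGridIndex (M : ℕ) (u y : ℝ) : ℕ := min (M - 1) ⌊1 / 2 - y / u⌋.toNat

variable {M : ℕ} {u : ℝ}

lemma measurable_nearestGridIndex : Measurable (nearestGridIndex M u) := by
  unfold nearestGridIndex
  fun_prop

lemma nearestGridIndex_sub_mul {x : ℝ} (hu : 0 < u) (hx : |x| < u / 2) {j : ℕ} (hj : j < M) :
    nearestGridIndex M u (x - j * u) = j := by
  have hfloor : ⌊1 / 2 - (x - j * u) / u⌋ = j := by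
    rw [Int.floor_eq_iff]
    have hdiv : (x - j * u) / u = x / u - j := by field_simp
    have hsmall : |x / u| < 1 / 2 := by rw [abs_div, abs_of_pos hu, div_lt_iff₀ hu]; linarith
    rw [abs_lt] at hsmall
    push_cast
    constructor <;> linarith
  rw [nearestGridIndex, hfloor, Int.toNat_natCast]
  omega

lemma nearestGridIndex_of_nonneg {x : ℝ} (hu : 0 < u) (hx : 0 ≤ x) :
    nearestGridIndex M u x = 0 := by
  have hfloor : ⌊1 / 2 - x / u⌋ ≤ 0 := by
    rw [Int.floor_le_iff]
    have : 0 ≤ x / u := div_nonneg hx hu.le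
    push_cast
    linarith
  rw [nearestGridIndex, Int.toNat_eq_zero.2 hfloor, Nat.min_zero]

lemma nearestGridIndex_sub_last {x : ℝ} (hu : 0 < u) (hx : x < 0) :
    nearestGridIndex M u (x - (M - 1 : ℕ) * u) = M - 1 := by
  have hfloor : ((M - 1 : ℕ) : ℤ) ≤ ⌊1 / 2 - (x - (M - 1 : ℕ) * u) / u⌋ := by
    rw [Int.le_floor]
    have hdiv : (x - (M - 1 : ℕ) * u) / u = x / u - (M - 1 : ℕ) := by field_simp
    have hneg : x / u < 0 := div_neg_of_neg_of_pos hx hu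
    push_cast
    linarith
  simp only [nearestGridIndex, min_eq_left_iff]
  omega

end NearestGridIndex

lemma sub_Hfun1_le (P : Measure ℝ) [IsProbabilityMeasure P] {M : ℕ} (hM : 1 ≤ M) {u : ℝ}
    (hu : 0 < u) :
    (M : ℝ≥0∞) - Hfun1 P M u ≤ ((M : ℝ≥0∞) - 1) * P {x | u / 2 ≤ |x|} := by
  set A : Fin M → Set ℝ := fun j => nearestGridIndex M u ⁻¹' {(j : ℕ)}
  set B : Fin M → Set ℝ := fun j => {x | nearestGridIndex M u (x - j * u) ≠ j}
  have hA : ∀ j, MeasurableSet (A j) := fun j =>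
    measurable_nearestGridIndex (measurableSet_singleton _)
  have hB : ∀ j, MeasurableSet (B j) := fun j =>
    (measurable_nearestGridIndex.comp (measurable_sub_const _)) (measurableSet_singleton _).compl
  have hsuccess : ∑ j : Fin M, shiftLaw1 P (j * u) (A j) ≤ Hfun1 P M u :=
    sum_measure_le_lintegral_iSup_rnDeriv
      (shiftLaw1_absolutelyContinuous_mixMeasure1 P fun k : Fin M => k * u) hA
      fun i j hij => pairwise_disjoint_fiber _ (Fin.val_injective.ne hij)
  have hfailure : ∀ j : Fin M, shiftLaw1 P (j * u) (A j)ᶜ = P (B j) := fun j =>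
    shiftLaw1_apply P _ (hA j).compl
  have hBS : ∀ j, B j ⊆ {x | u / 2 ≤ |x|} := fun j x hx => by
    by_contra hlt
    exact hx (nearestGridIndex_sub_mul hu (not_le.1 hlt) j.isLt)
  have hmiss : ∀ x ∈ {x : ℝ | u / 2 ≤ |x|}, ∃ j, x ∉ B j := by
    intro x _
    rcases le_or_gt 0 x with hx | hx
    · exact ⟨⟨0, hM⟩, by simpa [B] using nearestGridIndex_of_nonneg hu hx⟩
    · exact ⟨⟨M - 1, by omega⟩, by simpa [B] using nearestGridIndex_sub_last hu hx⟩
  calc (M : ℝ≥0∞) - Hfun1 P M u ≤ M - ∑ j : Fin M, shiftLaw1 P (j * u) (A j) := by gcongr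
    _ ≤ ∑ j : Fin M, shiftLaw1 P (j * u) (A j)ᶜ := by
        rw [tsub_le_iff_right, ← Finset.sum_add_distrib]
        simp [add_comm, measure_add_measure_compl (hA _)]
    _ = ∑ j, P (B j) := Finset.sum_congr rfl fun j _ => hfailure j
    _ ≤ ((M : ℝ≥0∞) - 1) * P {x | u / 2 ≤ |x|} := by
        simpa using sum_measure_le_card_sub_one_mul P hB hBS hmiss

section HighNoise

variable (P : Measure ℝ) [IsProbabilityMeasure P] {M : ℕ}

lemma sub_Hfun1_div_le_min (hM : 2 ≤ M) {u : ℝ} (hu : 0 < u) (a : ℝ) :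
    ((M : ℝ≥0∞) - Hfun1 P M u) / ((M : ℝ≥0∞) - 1)
      ≤ min (1 - P {a} / ((M : ℝ≥0∞) - 1)) (P {x | u / 2 ≤ |x|}) := by
  have hM1 : (M : ℝ≥0∞) - 1 ≠ 0 := by
    rw [ne_eq, tsub_eq_zero_iff_le, not_le]
    exact_mod_cast hM
  have hM1' : (M : ℝ≥0∞) - 1 ≠ ⊤ := ENNReal.sub_ne_top (ENNReal.natCast_ne_top M)
  refine le_min ?_ ?_
  · calc ((M : ℝ≥0∞) - Hfun1 P M u) / ((M : ℝ≥0∞) - 1)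
        ≤ ((M : ℝ≥0∞) - 1 - P {a}) / ((M : ℝ≥0∞) - 1) := by
          refine ENNReal.div_le_div_right ?_ _
          rw [tsub_tsub]
          exact tsub_le_tsub_left (one_add_measure_singleton_le_Hfun1 P hM hu a) _
      _ = 1 - P {a} / ((M : ℝ≥0∞) - 1) := by
          rw [ENNReal.sub_div fun _ _ => hM1, ENNReal.div_self hM1 hM1']
  · rw [ENNReal.div_le_iff_le_mul (Or.inl hM1) (Or.inl hM1'), mul_comm]
    exact sub_Hfun1_le P (by omega) hu

lemma Vbar1_le_lintegral_min (hM : 2 ≤ M) (a : ℝ) :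
    Vbar1 P M ≤ ∫⁻ t in Ioi 0,
      ENNReal.ofReal (t / 2) * min (1 - P {a} / ((M : ℝ≥0∞) - 1)) (P {x | t / 2 ≤ |x|}) := by
  refine setLIntegral_mono' measurableSet_Ioi fun t ht => ?_
  gcongr
  refine iSup₂_le fun u htu => (sub_Hfun1_div_le_min P hM (ht.trans_le htu) a).trans ?_
  gcongr

end HighNoise

lemma evariance_eq_lintegral_tail (P : Measure ℝ) (hmean : ∫ x, x ∂P = 0) :
    evariance (fun x => x) P = ∫⁻ t in Ioi 0, ENNReal.ofReal (t / 2) * P {x | t / 2 ≤ |x|} := by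
  have hlayer := lintegral_comp_eq_lintegral_meas_le_mul P (f := fun x => 2 * |x|)
    (g := fun t => t / 2) (ae_of_all _ fun x => by positivity)
    (measurable_abs.const_mul 2).aemeasurable
    (fun t _ => (continuous_id.div_const 2).intervalIntegrable 0 t)
    (ae_restrict_of_forall_mem measurableSet_Ioi fun t ht => (half_pos ht).le)
  rw [evariance_eq_lintegral_ofReal]
  convert hlayer using 3 with x t
  · rw [hmean, sub_zero, intervalIntegral.integral_div, integral_id, ← sq_abs x]
    ring_nf
  · simp_rw [mul_comm (ENNReal.ofReal _), div_le_iff₀' (two_pos (α := ℝ))]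

lemma setLIntegral_mul_min_lt {g : ℝ → ℝ≥0∞} (hg : Measurable g) {r : ℝ≥0∞} {c : ℝ}
    (hc : 0 < c) (hrg : ∀ t ∈ Ioc 0 c, r < g t)
    (hfin : ∫⁻ t in Ioi 0, ENNReal.ofReal (t / 2) * g t ≠ ∞) :
    ∫⁻ t in Ioi 0, ENNReal.ofReal (t / 2) * min r (g t)
      < ∫⁻ t in Ioi 0, ENNReal.ofReal (t / 2) * g t := by
  have hle : ∀ t, ENNReal.ofReal (t / 2) * min r (g t) ≤ ENNReal.ofReal (t / 2) * g t :=
    fun t => by gcongr; exact min_le_right _ _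
  refine lintegral_strict_mono_of_ae_le_of_ae_lt_on (s := Ioc 0 c) (by fun_prop)
    (ne_top_of_le_ne_top hfin (lintegral_mono hle)) (ae_of_all _ hle) ?_
    (ae_of_all _ fun t ht => ?_)
  · rw [Measure.restrict_apply measurableSet_Ioc, Ioc_inter_Ioi, max_self, Real.volume_Ioc]
    simpa using hc
  · rw [min_eq_left (hrg t ht).le]
    exact ENNReal.mul_lt_mul_right (by simpa using ht.1) ENNReal.ofReal_ne_top (hrg t ht)

lemma measure_le_abs_eq_one {P : Measure ℝ} [IsProbabilityMeasure P]
    (hdisc : P {x | P {x} ≠ 0}ᶜ = 0) {c : ℝ} (hc : ∀ x, P {x} ≠ 0 → c ≤ |x|) {s : ℝ}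
    (hs : s ≤ c) : P {x | s ≤ |x|} = 1 := by
  rw [← prob_compl_eq_zero_iff (measurableSet_le measurable_const measurable_abs)]
  refine measure_mono_null ?_ hdisc
  intro x hx hatom
  exact hx (hs.trans (hc x hatom))

theorem discrete_high_noise_not_tight_general
    (P : Measure ℝ) [IsProbabilityMeasure P]
    (hdisc : P {x : ℝ | P {x} ≠ 0}ᶜ = 0)
    (hL2 : MemLp (fun x => x) 2 P)
    (hmean : ∫ x, x ∂P = 0)
    (hinf : ∃ c > (0 : ℝ), ∀ x : ℝ, P {x} ≠ 0 → c ≤ |x|)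
    (M : ℕ) (hM : 2 ≤ M) :
    Vbar1 P M < evariance (fun x => x) P := by
  obtain ⟨c, hc, hcx⟩ := hinf
  obtain ⟨a, ha⟩ : ∃ a, P {a} ≠ 0 := by
    by_contra! h
    simp [h] at hdisc
  have hgap : ∀ t ∈ Ioc 0 (2 * c), 1 - P {a} / ((M : ℝ≥0∞) - 1) < P {x | t / 2 ≤ |x|} :=
    fun t ht => by
      rw [measure_le_abs_eq_one hdisc hcx (by linarith [ht.2])]
      exact ENNReal.sub_lt_self ENNReal.one_ne_top one_ne_zero
        (ENNReal.div_ne_zero.2 ⟨ha, ENNReal.sub_ne_top (ENNReal.natCast_ne_top M)⟩)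
  have htail : Antitone fun t : ℝ => P {x | t / 2 ≤ |x|} := fun s t hst =>
    measure_mono fun x hx => (div_le_div_of_nonneg_right hst zero_le_two).trans hx
  have hvar := hL2.evariance_lt_top.ne
  rw [evariance_eq_lintegral_tail P hmean] at hvar ⊢
  calc Vbar1 P M ≤ _ := Vbar1_le_lintegral_min P hM a
    _ < _ := setLIntegral_mul_min_lt htail.measurable (mul_pos two_pos hc) hgap hvar

/-- **The Ziv–Zakai bound is never tight in the high-noise regime for discrete inputs
(Theorem 4).** If `X` is a discrete real random variable with `E[X] = 0` whose support is
bounded away from zero, then `V̄(P_X, M) < Var(X)` for every `M ≥ 2`. -/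
theorem discrete_high_noise_not_tight
    (P : Measure ℝ) [IsProbabilityMeasure P]
    (hcount : Set.Countable {x : ℝ | P {x} ≠ 0})
    (hdisc : P {x : ℝ | P {x} ≠ 0}ᶜ = 0)
    (hL2 : MemLp (fun x => x) 2 P)
    (hmean : ∫ x, x ∂P = 0)
    (hinf : ∃ c > (0 : ℝ), ∀ x : ℝ, P {x} ≠ 0 → c ≤ |x|)
    (M : ℕ) (hM : 2 ≤ M) :
    Vbar1 P M < evariance (fun x => x) P :=
  discrete_high_noise_not_tight_general P hdisc hL2 hmean hinf M hM
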